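/- Let n ≥ 1, p ≥ 1 and let k be an integer with 0 ≤ 2k ≤ p. The number of columns of type B and height p over the alphabet 𝔅_n that contain exactly 2k or exactly 2k+1 occurrences of the letter 0 equals binom(2n+1, p−2k). -/

import Mathlib

/-- The alphabet `𝔅_n = {1 ≺ ⋯ ≺ n ≺ 0 ≺ n̄ ≺ ⋯ ≺ 1̄}` with `2n+1` letters, encoded as
`Fin (2n+1)` with its natural order: the letter `j` (for `1 ≤ j ≤ n`) is `j−1`, the letter
`0` is `n`, and the barred letter `j̄` is `2n+1−j`. -/
abbrev BLetter (n : ℕ) := Fin (2 * n + 1)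

/-- A column of type `B` and height `p`: a weakly increasing `p`-tuple of letters of `𝔅_n`
in which only the letter `0` (encoded as `n`) may be repeated (repetitions in a weakly
increasing tuple are detected on adjacent entries). -/
def IsColumnB (n p : ℕ) (C : Fin p → BLetter n) : Prop :=
  Monotone C ∧ ∀ (j : ℕ) (h : j + 1 < p),
    C ⟨j, by omega⟩ = C ⟨j + 1, h⟩ → (C ⟨j, by omega⟩ : ℕ) = n

/-- The number of occurrences of the letter `0` (encoded as `n`) in the `p`-tuple `C`. -/
def zeroCount (n p : ℕ) (C : Fin p → BLetter n) : ℕ :=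
  (Finset.univ.filter (fun j : Fin p => (C j : ℕ) = n)).card

/-!
A column is determined by its multiset of letters, in which every letter other than `0`
occurs at most once. Adding `2k` zeros to a set `S` of `p - 2k` letters of `𝔅_n` and sorting
therefore gives a column with `2k` zeros (if `0 ∉ S`) or `2k + 1` zeros (if `0 ∈ S`), and
every such column arises from exactly one `S`.
-/

open Finset Multiset

section Tuple

variable {α : Type*} {p : ℕ}

def tupleValues (C : Fin p → α) : Multiset α :=
  Finset.univ.val.map C

theorem tupleValues_eq_ofFn (C : Fin p → α) : tupleValues C = List.ofFn C :=
  Fin.univ_val_map C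

@[simp]
theorem card_tupleValues (C : Fin p → α) : Multiset.card (tupleValues C) = p := by
  simp [tupleValues]

theorem count_tupleValues [DecidableEq α] (C : Fin p → α) (x : α) :
    (tupleValues C).count x = #{i | C i = x} := by
  simp only [tupleValues, Multiset.count_map, Finset.card_def, Finset.filter_val, eq_comm]

variable [LinearOrder α]

theorem Monotone.eq_of_tupleValues_eq {C D : Fin p → α} (hC : Monotone C) (hD : Monotone D)
    (h : tupleValues C = tupleValues D) : C = D := by
  rw [tupleValues_eq_ofFn, tupleValues_eq_ofFn, Multiset.coe_eq_coe] at h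
  exact List.ofFn_injective <|
    h.eq_of_sortedLE (List.sortedLE_ofFn_iff.2 hC) (List.sortedLE_ofFn_iff.2 hD)

def sortedTuple (M : Multiset α) (hM : Multiset.card M = p) : Fin p → α :=
  fun i => (M.sort).get (i.cast (by rw [Multiset.length_sort, hM]))

theorem monotone_sortedTuple (M : Multiset α) (hM : Multiset.card M = p) :
    Monotone (sortedTuple M hM) :=
  fun _ _ hij => (M.pairwise_sort _).rel_get_of_le hij

theorem tupleValues_sortedTuple (M : Multiset α) (hM : Multiset.card M = p) :
    tupleValues (sortedTuple M hM) = M := by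
  have hlen : (M.sort).length = p := by rw [Multiset.length_sort, hM]
  rw [tupleValues_eq_ofFn]
  unfold sortedTuple
  rw [← List.ofFn_congr hlen, List.ofFn_get, Multiset.sort_eq]

end Tuple

section Multiset

variable {α : Type*} [DecidableEq α]

theorem Finset.count_val_add_replicate_le_one (S : Finset α) (m : ℕ) {z x : α} (hx : x ≠ z) :
    (S.val + replicate m z).count x ≤ 1 := by
  rw [Multiset.count_add, Multiset.count_replicate, if_neg hx.symm, add_zero]
  exact Multiset.nodup_iff_count_le_one.1 S.nodup x

theorem Finset.count_val_add_replicate_self (S : Finset α) (m : ℕ) (z : α) :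
    (S.val + replicate m z).count z = m ∨ (S.val + replicate m z).count z = m + 1 := by
  rw [Multiset.count_add, Multiset.count_replicate_self]
  by_cases hz : z ∈ S
  · simp [Multiset.count_eq_one_of_mem S.nodup hz, add_comm]
  · simp [Multiset.count_eq_zero_of_notMem hz]

theorem Multiset.exists_finset_val_add_replicate_eq {M : Multiset α} {z : α} {m : ℕ}
    (hM : ∀ x ≠ z, M.count x ≤ 1) (hz : M.count z = m ∨ M.count z = m + 1) :
    ∃ S : Finset α, S.val + replicate m z = M := by
  have hle : replicate m z ≤ M := by
    rw [Multiset.le_iff_count]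
    intro x
    rw [Multiset.count_replicate]
    split_ifs with h
    · subst h; omega
    · exact Nat.zero_le _
  have hnodup : (M - replicate m z).Nodup := by
    rw [Multiset.nodup_iff_count_le_one]
    intro x
    rw [Multiset.count_sub, Multiset.count_replicate]
    split_ifs with h
    · subst h; omega
    · exact (Nat.sub_le _ _).trans (hM x (Ne.symm h))
  exact ⟨⟨_, hnodup⟩, Multiset.sub_add_cancel hle⟩

end Multiset

def zeroLetter (n : ℕ) : BLetter n := ⟨n, by omega⟩

theorem zeroCount_eq_count (n p : ℕ) (C : Fin p → BLetter n) :
    zeroCount n p C = (tupleValues C).count (zeroLetter n) := by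
  simp only [zeroCount, count_tupleValues, Fin.ext_iff, zeroLetter]

theorem isColumnB_iff {n p : ℕ} {C : Fin p → BLetter n} :
    IsColumnB n p C ↔ Monotone C ∧ ∀ x ≠ zeroLetter n, (tupleValues C).count x ≤ 1 := by
  refine and_congr_right fun hC => ⟨fun hrep x hx => ?_, fun hcount j hj heq => ?_⟩
  · rw [count_tupleValues, Finset.card_le_one]
    intro i hi i' hi'
    simp only [Finset.mem_filter, Finset.mem_univ, true_and] at hi hi'
    by_contra hne
    wlog hlt : i < i' generalizing i i'
    · exact this i' i hi' hi (Ne.symm hne) (lt_of_le_of_ne (not_lt.1 hlt) (Ne.symm hne))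
    have hsucc : (i : ℕ) + 1 < p := by omega
    have hadj : C i = C ⟨i + 1, hsucc⟩ :=
      le_antisymm (hC (Fin.mk_le_mk.2 (by omega)))
        (hi ▸ hi' ▸ hC (Fin.mk_le_mk.2 (by omega)))
    exact hx (hi ▸ Fin.ext (hrep i hsucc hadj))
  · by_contra hne
    have htwo := hcount (C ⟨j, by omega⟩) (fun h => hne (by rw [h]; rfl))
    rw [count_tupleValues, Finset.card_le_one] at htwo
    have := htwo ⟨j, by omega⟩ (by simp) ⟨j + 1, hj⟩ (by simp [heq])
    simp [Fin.ext_iff] at this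

theorem isColumnB_sortedTuple {n p : ℕ} {M : Multiset (BLetter n)} (hM : Multiset.card M = p)
    (hcount : ∀ x ≠ zeroLetter n, M.count x ≤ 1) : IsColumnB n p (sortedTuple M hM) :=
  isColumnB_iff.2 ⟨monotone_sortedTuple M hM, by rwa [tupleValues_sortedTuple]⟩

theorem zeroCount_sortedTuple {n p : ℕ} (M : Multiset (BLetter n)) (hM : Multiset.card M = p) :
    zeroCount n p (sortedTuple M hM) = M.count (zeroLetter n) := by
  rw [zeroCount_eq_count, tupleValues_sortedTuple]

section ColumnOfFinset

variable {n p k : ℕ}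

theorem card_val_add_replicate_eq {S : Finset (BLetter n)} (hk : 2 * k ≤ p)
    (hS : #S = p - 2 * k) : Multiset.card (S.val + replicate (2 * k) (zeroLetter n)) = p := by
  rw [Multiset.card_add, Multiset.card_replicate, ← Finset.card_def, hS]
  omega

def columnOfFinset (hk : 2 * k ≤ p) (S : {S : Finset (BLetter n) // #S = p - 2 * k}) :
    {C : Fin p → BLetter n //
      IsColumnB n p C ∧ (zeroCount n p C = 2 * k ∨ zeroCount n p C = 2 * k + 1)} :=
  ⟨sortedTuple _ (card_val_add_replicate_eq hk S.2),
    isColumnB_sortedTuple _ fun _ hx => S.1.count_val_add_replicate_le_one _ hx,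
    by rw [zeroCount_sortedTuple]; exact S.1.count_val_add_replicate_self _ _⟩

theorem columnOfFinset_injective (hk : 2 * k ≤ p) :
    Function.Injective (columnOfFinset (n := n) hk) := by
  intro S T hST
  have hvalues := congrArg (tupleValues ∘ Subtype.val) hST
  simp only [Function.comp, columnOfFinset, tupleValues_sortedTuple, add_left_inj] at hvalues
  exact Subtype.ext (Finset.val_inj.1 hvalues)

theorem columnOfFinset_surjective (hk : 2 * k ≤ p) :
    Function.Surjective (columnOfFinset (n := n) hk) := by
  rintro ⟨C, hC, hzero⟩
  obtain ⟨hmono, hcount⟩ := isColumnB_iff.1 hC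
  rw [zeroCount_eq_count] at hzero
  obtain ⟨S, hS⟩ := Multiset.exists_finset_val_add_replicate_eq hcount hzero
  have hcard : #S = p - 2 * k := by
    have := congrArg Multiset.card hS
    rw [Multiset.card_add, Multiset.card_replicate, card_tupleValues, ← Finset.card_def] at this
    omega
  refine ⟨⟨S, hcard⟩, Subtype.ext ?_⟩
  refine (monotone_sortedTuple _ (card_val_add_replicate_eq hk hcard)).eq_of_tupleValues_eq hmono ?_
  rw [tupleValues_sortedTuple, hS]

end ColumnOfFinset

theorem card_columnB_with_zeros_general (n p k : ℕ) (hk : 2 * k ≤ p) :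
    Nat.card {C : Fin p → BLetter n //
        IsColumnB n p C ∧ (zeroCount n p C = 2 * k ∨ zeroCount n p C = 2 * k + 1)} =
      Nat.choose (2 * n + 1) (p - 2 * k) := by
  rw [← Nat.card_eq_of_bijective _
      ⟨columnOfFinset_injective (n := n) hk, columnOfFinset_surjective hk⟩,
    Nat.card_eq_fintype_card, Fintype.card_finset_len, Fintype.card_fin]

/-- For `n ≥ 1`, `p ≥ 1` and `0 ≤ 2k ≤ p`, the number of columns of
type `B` and height `p` over `𝔅_n` containing exactly `2k` or exactly `2k+1` occurrences
of the letter `0` equals `C(2n+1, p−2k)`. -/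
theorem card_columnB_with_zeros (n p k : ℕ) (hn : 1 ≤ n) (hp : 1 ≤ p) (hk : 2 * k ≤ p) :
    Nat.card {C : Fin p → BLetter n //
        IsColumnB n p C ∧ (zeroCount n p C = 2 * k ∨ zeroCount n p C = 2 * k + 1)} =
      Nat.choose (2 * n + 1) (p - 2 * k) :=
  card_columnB_with_zeros_general n p k hk
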